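/- Let G = (V,E) be a graph with |V| = p and let σ be any ordering of V. Then the triangulated graph D^σ(G) = (V, D^σ(E)) satisfies: (i) E ⊆ D^σ(E); (ii) σ is a perfect elimination ordering of D^σ(G); and (iii) D^σ(G) is decomposable. In particular, D^σ(G) is a decomposable cover of G. -/

import Mathlib

open SimpleGraph

variable {V : Type*}

/-- One step of the elimination/triangulation process: at step `k` (0-based) the vertex with
label `k` is eliminated, and all pairs of its neighbours with larger labels are joined. -/
def triStep {n : ℕ} (σ : V ≃ Fin n) (H : SimpleGraph V) (k : ℕ) : SimpleGraph V where
  Adj u v := H.Adj u v ∨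
    (u ≠ v ∧ ∃ hk : k < n, k < (σ u : ℕ) ∧ k < (σ v : ℕ) ∧
      H.Adj u (σ.symm ⟨k, hk⟩) ∧ H.Adj v (σ.symm ⟨k, hk⟩))
  symm := ⟨by
    rintro u v (h | ⟨hne, hk, h1, h2, h3, h4⟩)
    · exact Or.inl h.symm
    · exact Or.inr ⟨hne.symm, hk, h2, h1, h4, h3⟩⟩
  loopless := ⟨by
    rintro u (h | ⟨hne, _⟩)
    · exact h.ne rfl
    · exact hne rfl⟩

/-- The sequence of graphs `E_0, E_1, …` in the triangulation process. -/
def triSeq {n : ℕ} (σ : V ≃ Fin n) (G : SimpleGraph V) : ℕ → SimpleGraph V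
  | 0 => G
  | k + 1 => triStep σ (triSeq σ G k) k

/-- The triangulation `D^σ(G)` of `G` under the ordering `σ` (`p − 2` elimination steps). -/
def triangulation {n : ℕ} (σ : V ≃ Fin n) (G : SimpleGraph V) : SimpleGraph V :=
  triSeq σ G (n - 2)

/-- `σ` is a perfect elimination ordering of `G`: for every `j`, the vertex `σ⁻¹(j)` together
with its higher-labelled neighbours forms a clique. -/
def IsPerfectElimOrdering {n : ℕ} (σ : V ≃ Fin n) (G : SimpleGraph V) : Prop :=
  ∀ j : Fin n,
    G.IsClique ({σ.symm j} ∪ {v : V | (j : ℕ) < (σ v : ℕ) ∧ G.Adj v (σ.symm j)})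

/-- A graph is decomposable (chordal) if it has no induced cycle of length `≥ 4`. -/
def IsDecomposable (G : SimpleGraph V) : Prop :=
  ∀ n : ℕ, 4 ≤ n → IsEmpty (SimpleGraph.cycleGraph n ↪g G)

/-- `σ` is a Generalized Bartlett ordering of `G`: no triangle of `D^σ(G)` consists of three
non-edges of `G`. -/
def IsGBOrdering {n : ℕ} (σ : V ≃ Fin n) (G : SimpleGraph V) : Prop :=
  ¬ ∃ u v w : V,
      ¬ G.Adj u v ∧ ¬ G.Adj v w ∧ ¬ G.Adj u w ∧
      (triangulation σ G).Adj u v ∧ (triangulation σ G).Adj v w ∧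
      (triangulation σ G).Adj u w

/-- `G` is a Generalized Bartlett graph: it admits a Generalized Bartlett ordering. -/
def IsGB (G : SimpleGraph V) : Prop :=
  ∃ (n : ℕ) (σ : V ≃ Fin n), IsGBOrdering σ G

/-! Step `k` only joins vertices of label `> k`, so no edge at `σ⁻¹(j)` appears after step `j`:
the later neighbours of `σ⁻¹(j)` in `D^σ(G)` are already its neighbours when `σ⁻¹(j)` is
eliminated, and that step makes them a clique. Two distinct labels above `j` force `j ≤ p - 3`, so
this step is among the `p - 2` performed. Finally, a perfect elimination ordering rules out
induced cycles of length `≥ 4`: the two cycle neighbours of the lowest-labelled vertex of such a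
cycle would have to be adjacent. -/

section Triangulation

variable {n : ℕ} (σ : V ≃ Fin n)

lemma triSeq_mono (G : SimpleGraph V) : Monotone (triSeq σ G) :=
  monotone_nat_of_le_succ fun _ _ _ h => Or.inl h

lemma le_triangulation (G : SimpleGraph V) : G ≤ triangulation σ G :=
  triSeq_mono σ G (Nat.zero_le _)

variable {σ}

lemma triStep_adj_of_label_le {H : SimpleGraph V} {k : ℕ} {u v : V}
    (h : (triStep σ H k).Adj u v) (hu : (σ u : ℕ) ≤ k) : H.Adj u v := by
  rcases h with h | ⟨-, -, hku, -⟩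
  · exact h
  · omega

lemma triSeq_adj_of_label_le {G : SimpleGraph V} {j k : ℕ} {u v : V} (hjk : j ≤ k)
    (h : (triSeq σ G k).Adj u v) (hu : (σ u : ℕ) ≤ j) : (triSeq σ G j).Adj u v := by
  induction k, hjk using Nat.le_induction with
  | base => exact h
  | succ k hjk ih => exact ih (triStep_adj_of_label_le h (hu.trans hjk))

lemma triSeq_succ_adj {G : SimpleGraph V} {u v w : V} (huv : u ≠ v) (hu : σ w < σ u)
    (hv : σ w < σ v) (hwu : (triSeq σ G (σ w)).Adj u w) (hwv : (triSeq σ G (σ w)).Adj v w) :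
    (triSeq σ G (σ w + 1)).Adj u v :=
  Or.inr ⟨huv, (σ w).isLt, hu, hv, by simpa using hwu, by simpa using hwv⟩

lemma isPerfectElimOrdering_iff {H : SimpleGraph V} :
    IsPerfectElimOrdering σ H ↔ ∀ ⦃u v w : V⦄, u ≠ v → σ w < σ u → σ w < σ v →
      H.Adj u w → H.Adj v w → H.Adj u v := by
  constructor
  · intro h u v w huv hu hv hwu hwv
    exact h (σ w) (Or.inr ⟨hu, by simpa using hwu⟩) (Or.inr ⟨hv, by simpa using hwv⟩) huv
  · rintro h j u (rfl | ⟨hu, hju⟩) v (rfl | ⟨hv, hjv⟩) huv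
    · exact absurd rfl huv
    · exact hjv.symm
    · exact hju
    · exact h (w := σ.symm j) huv (by simpa using hu) (by simpa using hv) hju hjv

lemma triangulation_isPerfectElimOrdering (G : SimpleGraph V) :
    IsPerfectElimOrdering σ (triangulation σ G) := by
  rw [isPerfectElimOrdering_iff]
  intro u v w huv hu hv hwu hwv
  have hlabel : (σ w : ℕ) + 1 ≤ n - 2 := by
    have hne : σ u ≠ σ v := σ.injective.ne huv
    have := (σ u).isLt
    have := (σ v).isLt
    omega
  have hwu' := triSeq_adj_of_label_le (by omega) hwu.symm le_rfl
  have hwv' := triSeq_adj_of_label_le (by omega) hwv.symm le_rfl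
  exact triSeq_mono σ G hlabel (triSeq_succ_adj huv hu hv hwu'.symm hwv'.symm)

end Triangulation

lemma cycleGraph_exists_nonadj_neighbors {n : ℕ} (hn : 4 ≤ n) (i : Fin n) :
    ∃ a b, (cycleGraph n).Adj a i ∧ (cycleGraph n).Adj b i ∧ a ≠ b ∧
      ¬(cycleGraph n).Adj a b := by
  obtain ⟨k, rfl⟩ : ∃ k, n = k + 2 + 2 := ⟨n - 4, by omega⟩
  have h2 : (i + 1) - (i - 1) = 2 := by abel
  have hval : ((2 : Fin (k + 2 + 2)) : ℕ) = 2 := by simp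
  refine ⟨i + 1, i - 1, ?_, ?_, ?_, ?_⟩
  · simp [cycleGraph_adj]
  · simp [cycleGraph_adj]
  · rw [ne_eq, ← sub_eq_zero, h2, Fin.ext_iff, hval]
    simp
  · rw [cycleGraph_adj', ← neg_sub (i + 1), h2, Fin.val_neg', hval,
      Nat.mod_eq_of_lt (by omega)]
    omega

lemma IsPerfectElimOrdering.isDecomposable {n : ℕ} {σ : V ≃ Fin n} {H : SimpleGraph V}
    (hσ : IsPerfectElimOrdering σ H) : IsDecomposable H := by
  intro m hm
  refine ⟨fun e => ?_⟩
  have : Nonempty (Fin m) := ⟨⟨0, by omega⟩⟩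
  obtain ⟨i, hi⟩ := Finite.exists_min fun i => σ (e i)
  obtain ⟨a, b, ha, hb, hab, hnadj⟩ := cycleGraph_exists_nonadj_neighbors hm i
  have hlt : ∀ c, (cycleGraph m).Adj c i → σ (e i) < σ (e c) := fun c hc =>
    (hi c).lt_of_ne fun h => hc.ne (e.injective (σ.injective h)).symm
  exact hnadj <| e.map_adj_iff.mp <| isPerfectElimOrdering_iff.mp hσ (e.injective.ne hab)
    (hlt a ha) (hlt b hb) (e.map_adj_iff.mpr ha) (e.map_adj_iff.mpr hb)

/-- the triangulation `D^σ(G)` contains `G`, has `σ` as a perfect elimination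
ordering, and is decomposable; in particular it is a decomposable cover of `G`. -/
theorem triangulation_isDecomposableCover [Fintype V] (G : SimpleGraph V)
    (σ : V ≃ Fin (Fintype.card V)) :
    G ≤ triangulation σ G ∧
      IsPerfectElimOrdering σ (triangulation σ G) ∧
      IsDecomposable (triangulation σ G) :=
  ⟨le_triangulation σ G, triangulation_isPerfectElimOrdering G,
    (triangulation_isPerfectElimOrdering G).isDecomposable⟩
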